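/- Assume there exist a constant A > 0 and r ∈ ℕ such that for all n, every operator T on ℓ₂ⁿ with ‖Te_i‖ = 1 for all i and ‖T‖ ≤ 2 admits a partition {A_j}_{j=1}^r of {1,...,n} with ‖Σ_{i∈A_j} a_i Te_i‖² ≥ A Σ_{i∈A_j}|a_i|² for all scalars. Then for 0 < δ ≤ 3/4, every orthogonal projection P on ℓ₂ⁿ with ⟨Pe_i, e_i⟩ ≤ δ for all i admits a partition {A_j}_{j=1}^r of {1,...,n} with ‖Q_{A_j} P Q_{A_j}‖ ≤ 1 - A/4 for all j. -/

import Mathlib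

/-!
Write `P` as the orthogonal projection onto a subspace `K`, so that `1 - P` projects onto `Kᗮ`.
Since `⟨P e_i, e_i⟩ ≤ 3/4`, the columns `(1 - P) e_i` have norm at least `1/2`; normalising them,
`T = (1 - P) D` has unit columns and `‖T‖ ≤ ‖D‖ ≤ 2`. A lower Riesz bound `A` for `T` on a block
`S` is a lower Riesz bound `A/4` for `1 - P` on `S`, i.e. `‖(1 - P) Q_S x‖² ≥ (A/4) ‖Q_S x‖²`, so
by Pythagoras `‖P Q_S x‖² ≤ (1 - A/4) ‖Q_S x‖²`. The C*-identity gives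
`‖Q_S P Q_S‖ = ‖P Q_S‖² ≤ 1 - A/4`.
-/

noncomputable section

/-- The diagonal projection `Q_A` on `ℓ₂ⁿ`. -/
def Qfin {n : ℕ} (A : Finset (Fin n)) :
    EuclideanSpace ℂ (Fin n) →L[ℂ] EuclideanSpace ℂ (Fin n) :=
  LinearMap.toContinuousLinearMap
    { toFun := fun f => WithLp.toLp 2 (fun i => if i ∈ A then f i else 0)
      map_add' := fun f g => by
        ext i; by_cases h : i ∈ A <;> simp [h, PiLp.add_apply]
      map_smul' := fun c f => by
        ext i; by_cases h : i ∈ A <;> simp [h, PiLp.smul_apply] }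

section CStarRing

variable {R : Type*} [NonUnitalNormedRing R] [StarRing R] [CStarRing R]

lemma IsStarProjection.norm_mul_mul_self_eq {p q : R} (hp : IsStarProjection p)
    (hq : IsSelfAdjoint q) : ‖q * p * q‖ = ‖p * q‖ ^ 2 := by
  have : star (p * q) * (p * q) = q * p * q := by
    rw [star_mul, hp.isSelfAdjoint.star_eq, hq.star_eq, mul_assoc, ← mul_assoc p p,
      hp.isIdempotentElem.eq, mul_assoc]
  rw [← this, CStarRing.norm_star_mul_self, sq]

end CStarRing

lemma ContinuousLinearMap.sq_opNorm_le_of_sq_le {𝕜 E F : Type*} [RCLike 𝕜]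
    [NormedAddCommGroup E] [NormedSpace 𝕜 E] [NormedAddCommGroup F] [NormedSpace 𝕜 F]
    {f : E →L[𝕜] F} {C : ℝ} (hC : 0 ≤ C) (h : ∀ x, ‖f x‖ ^ 2 ≤ C * ‖x‖ ^ 2) :
    ‖f‖ ^ 2 ≤ C := by
  refine (Real.le_sqrt (norm_nonneg _) hC).mp (f.opNorm_le_bound (Real.sqrt_nonneg C) fun x => ?_)
  rw [← Real.sqrt_sq (norm_nonneg (f x)), ← Real.sqrt_sq (norm_nonneg x), ← Real.sqrt_mul hC]
  exact Real.sqrt_le_sqrt (h x)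

lemma Submodule.half_le_norm_starProjection_orthogonal {𝕜 E : Type*} [RCLike 𝕜]
    [NormedAddCommGroup E] [InnerProductSpace 𝕜 E] (K : Submodule 𝕜 E) [K.HasOrthogonalProjection]
    {v : E} (hv : ‖v‖ = 1) (hKv : RCLike.re (inner 𝕜 (K.starProjection v) v) ≤ 3 / 4) :
    1 / 2 ≤ ‖Kᗮ.starProjection v‖ := by
  have hpyth := K.norm_sq_eq_add_norm_sq_starProjection v
  have hre : RCLike.re (inner 𝕜 (K.starProjection v) v) = ‖K.starProjection v‖ ^ 2 :=
    K.re_inner_starProjection_eq_normSq v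
  rw [hv] at hpyth
  nlinarith [norm_nonneg (Kᗮ.starProjection v)]

section LowerRiesz

variable {𝕜 ι F : Type*} [RCLike 𝕜] [DecidableEq ι] [NormedAddCommGroup F] [InnerProductSpace 𝕜 F]

def HasLowerRieszBound (T : EuclideanSpace 𝕜 ι →L[𝕜] F) (S : Finset ι) (A : ℝ) : Prop :=
  ∀ a : ι → 𝕜, A * ∑ i ∈ S, ‖a i‖ ^ 2 ≤ ‖∑ i ∈ S, a i • T (EuclideanSpace.single i 1)‖ ^ 2

lemma HasLowerRieszBound.le_norm_sq_apply_single {T : EuclideanSpace 𝕜 ι →L[𝕜] F}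
    {S : Finset ι} {A : ℝ} (hT : HasLowerRieszBound T S A) {i : ι} (hi : i ∈ S) :
    A ≤ ‖T (EuclideanSpace.single i 1)‖ ^ 2 := by
  simpa [Pi.single_apply, apply_ite (fun z : 𝕜 => ‖z‖ ^ 2), hi] using hT (Pi.single i 1)

variable [Fintype ι]

def HasLowerRieszPartition (T : EuclideanSpace 𝕜 ι →L[𝕜] F) (r : ℕ) (A : ℝ) : Prop :=
  ∃ part : Fin r → Finset ι,
    (∀ j k, j ≠ k → Disjoint (part j) (part k)) ∧
    Finset.univ.biUnion part = Finset.univ ∧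
    ∀ j, HasLowerRieszBound T (part j) A

lemma HasLowerRieszPartition.le_one [Nonempty ι] {r : ℕ} {A : ℝ}
    (h : HasLowerRieszPartition (ContinuousLinearMap.id 𝕜 (EuclideanSpace 𝕜 ι)) r A) :
    A ≤ 1 := by
  obtain ⟨part, -, hcover, hriesz⟩ := h
  obtain ⟨i⟩ := ‹Nonempty ι›
  obtain ⟨j, -, hj⟩ := Finset.mem_biUnion.mp (hcover ▸ Finset.mem_univ i)
  simpa using (hriesz j).le_norm_sq_apply_single hj

end LowerRiesz

section ColumnNormalized

open Matrix
open scoped Matrix.Norms.L2Operator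

variable {𝕜 ι F : Type*} [RCLike 𝕜] [Fintype ι] [DecidableEq ι]
  [NormedAddCommGroup F] [InnerProductSpace 𝕜 F]

def columnNormalized (R : EuclideanSpace 𝕜 ι →L[𝕜] F) : EuclideanSpace 𝕜 ι →L[𝕜] F :=
  R ∘L toEuclideanCLM (𝕜 := 𝕜) (n := ι)
    (diagonal fun i => ((‖R (EuclideanSpace.single i 1)‖ : 𝕜))⁻¹)

variable {R : EuclideanSpace 𝕜 ι →L[𝕜] F}

lemma columnNormalized_apply_single (i : ι) :
    columnNormalized R (EuclideanSpace.single i 1) =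
      ((‖R (EuclideanSpace.single i 1)‖ : 𝕜))⁻¹ • R (EuclideanSpace.single i 1) := by
  rw [columnNormalized, ContinuousLinearMap.comp_apply, ← map_smul]
  congr 1
  ext j
  by_cases h : j = i <;> simp [mulVec_diagonal, h]

lemma norm_columnNormalized_apply_single {i : ι} (hi : R (EuclideanSpace.single i 1) ≠ 0) :
    ‖columnNormalized R (EuclideanSpace.single i 1)‖ = 1 := by
  rw [columnNormalized_apply_single, norm_smul, norm_inv, RCLike.norm_ofReal, abs_norm,
    inv_mul_cancel₀ (norm_ne_zero_iff.mpr hi)]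

lemma norm_columnNormalized_le {c : ℝ} (hc : 0 < c) (hR : ‖R‖ ≤ 1)
    (hcol : ∀ i, c ≤ ‖R (EuclideanSpace.single i 1)‖) : ‖columnNormalized R‖ ≤ c⁻¹ := by
  calc ‖columnNormalized R‖
      ≤ ‖R‖ * ‖(diagonal fun i => ((‖R (EuclideanSpace.single i 1)‖ : 𝕜))⁻¹)‖ :=
        R.opNorm_comp_le (toEuclideanCLM (𝕜 := 𝕜) (n := ι) _)
    _ ≤ 1 * c⁻¹ := by
        gcongr
        rw [l2_opNorm_diagonal]
        refine (pi_norm_le_iff_of_nonneg (by positivity)).mpr fun i => ?_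
        rw [norm_inv, RCLike.norm_ofReal, abs_norm]
        exact inv_anti₀ hc (hcol i)
    _ = c⁻¹ := one_mul _

lemma HasLowerRieszBound.of_columnNormalized {S : Finset ι} {A c : ℝ} (hA : 0 ≤ A) (hc : 0 < c)
    (hcol : ∀ i, c ≤ ‖R (EuclideanSpace.single i 1)‖)
    (hR : HasLowerRieszBound (columnNormalized R) S A) : HasLowerRieszBound R S (A * c ^ 2) := by
  intro a
  have hnorm : ∀ i, ((‖R (EuclideanSpace.single i 1)‖ : 𝕜)) ≠ 0 := fun i =>
    RCLike.ofReal_ne_zero.mpr (hc.trans_le (hcol i)).ne'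
  have hsum : ∑ i ∈ S, ((‖R (EuclideanSpace.single i 1)‖ : 𝕜) * a i) •
      columnNormalized R (EuclideanSpace.single i 1) =
        ∑ i ∈ S, a i • R (EuclideanSpace.single i 1) :=
    Finset.sum_congr rfl fun i _ => by
      rw [columnNormalized_apply_single, smul_smul, mul_right_comm, mul_inv_cancel₀ (hnorm i),
        one_mul]
  calc A * c ^ 2 * ∑ i ∈ S, ‖a i‖ ^ 2
      ≤ A * ∑ i ∈ S, ‖(‖R (EuclideanSpace.single i 1)‖ : 𝕜) * a i‖ ^ 2 := by
        rw [mul_assoc, Finset.mul_sum]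
        gcongr with i
        rw [norm_mul, RCLike.norm_ofReal, abs_norm, mul_pow]
        gcongr
        exact hcol i
    _ ≤ _ := hsum ▸ hR _

end ColumnNormalized

section Qfin

variable {n : ℕ}

lemma Qfin_apply (S : Finset (Fin n)) (x : EuclideanSpace ℂ (Fin n)) (i : Fin n) :
    Qfin S x i = if i ∈ S then x i else 0 := rfl

lemma isSelfAdjoint_Qfin (S : Finset (Fin n)) : IsSelfAdjoint (Qfin S) := by
  rw [ContinuousLinearMap.isSelfAdjoint_iff_isSymmetric]
  intro x y
  simp only [PiLp.inner_apply]
  exact Finset.sum_congr rfl fun i _ => by by_cases hi : i ∈ S <;> simp [Qfin_apply, hi]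

lemma norm_sq_Qfin_apply (S : Finset (Fin n)) (x : EuclideanSpace ℂ (Fin n)) :
    ‖Qfin S x‖ ^ 2 = ∑ i ∈ S, ‖x i‖ ^ 2 := by
  simp [EuclideanSpace.norm_sq_eq, Qfin_apply, apply_ite (fun z : ℂ => ‖z‖ ^ 2),
    Finset.sum_ite_mem]

lemma norm_Qfin_apply_le (S : Finset (Fin n)) (x : EuclideanSpace ℂ (Fin n)) :
    ‖Qfin S x‖ ≤ ‖x‖ := by
  refine (sq_le_sq₀ (norm_nonneg _) (norm_nonneg _)).mp ?_
  rw [norm_sq_Qfin_apply, EuclideanSpace.norm_sq_eq]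
  exact Finset.sum_le_univ_sum_of_nonneg fun i => sq_nonneg _

lemma sum_smul_single_eq_Qfin (S : Finset (Fin n)) (x : EuclideanSpace ℂ (Fin n)) :
    ∑ i ∈ S, x i • EuclideanSpace.single i 1 = Qfin S x := by
  ext k
  simp [Qfin_apply, Pi.single_apply, Finset.sum_apply]

lemma HasLowerRieszBound.le_norm_sq_apply_Qfin {F : Type*} [NormedAddCommGroup F]
    [InnerProductSpace ℂ F] {T : EuclideanSpace ℂ (Fin n) →L[ℂ] F} {S : Finset (Fin n)} {A : ℝ}
    (hT : HasLowerRieszBound T S A) (x : EuclideanSpace ℂ (Fin n)) :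
    A * ‖Qfin S x‖ ^ 2 ≤ ‖T (Qfin S x)‖ ^ 2 := by
  rw [norm_sq_Qfin_apply, ← sum_smul_single_eq_Qfin, map_sum]
  simpa only [map_smul] using hT x

lemma norm_Qfin_comp_starProjection_comp_Qfin_le
    {K : Submodule ℂ (EuclideanSpace ℂ (Fin n))} [K.HasOrthogonalProjection]
    {S : Finset (Fin n)} {B : ℝ} (hB : B ≤ 1) (h : HasLowerRieszBound Kᗮ.starProjection S B) :
    ‖(Qfin S).comp (K.starProjection.comp (Qfin S))‖ ≤ 1 - B := by
  have hPQ : ∀ x, ‖K.starProjection (Qfin S x)‖ ^ 2 ≤ (1 - B) * ‖x‖ ^ 2 := fun x =>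
    calc ‖K.starProjection (Qfin S x)‖ ^ 2
        = ‖Qfin S x‖ ^ 2 - ‖Kᗮ.starProjection (Qfin S x)‖ ^ 2 := by
          rw [K.norm_sq_eq_add_norm_sq_starProjection (Qfin S x)]; ring
      _ ≤ (1 - B) * ‖Qfin S x‖ ^ 2 := by linarith [h.le_norm_sq_apply_Qfin x]
      _ ≤ (1 - B) * ‖x‖ ^ 2 := by
          have := norm_Qfin_apply_le S x
          gcongr
  rw [← ContinuousLinearMap.mul_def, ← ContinuousLinearMap.mul_def, ← mul_assoc,
    isStarProjection_starProjection.norm_mul_mul_self_eq (isSelfAdjoint_Qfin S)]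
  exact ContinuousLinearMap.sq_opNorm_le_of_sq_le (sub_nonneg.mpr hB) hPQ

end Qfin

theorem lower_riesz_partition_implies_projection_paving
    (A : ℝ) (hA : 0 < A) (r : ℕ)
    (h : ∀ (n : ℕ) (T : EuclideanSpace ℂ (Fin n) →L[ℂ] EuclideanSpace ℂ (Fin n)),
      (∀ i, ‖T (EuclideanSpace.single i 1)‖ = 1) → ‖T‖ ≤ 2 →
      ∃ part : Fin r → Finset (Fin n),
        (∀ j k, j ≠ k → Disjoint (part j) (part k)) ∧
        Finset.univ.biUnion part = Finset.univ ∧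
        ∀ j, ∀ a : Fin n → ℂ,
          A * ∑ i ∈ part j, ‖a i‖ ^ 2 ≤
            ‖∑ i ∈ part j, a i • T (EuclideanSpace.single i 1)‖ ^ 2) :
    ∀ δ : ℝ, 0 < δ → δ ≤ 3 / 4 →
    ∀ (n : ℕ) (P : EuclideanSpace ℂ (Fin n) →L[ℂ] EuclideanSpace ℂ (Fin n)),
      IsIdempotentElem P → IsSelfAdjoint P →
      (∀ i, (inner ℂ (P (EuclideanSpace.single i 1)) (EuclideanSpace.single i 1) : ℂ).re ≤ δ) →
      ∃ part : Fin r → Finset (Fin n),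
        (∀ j k, j ≠ k → Disjoint (part j) (part k)) ∧
        Finset.univ.biUnion part = Finset.univ ∧
        ∀ j, ‖(Qfin (part j)).comp (P.comp (Qfin (part j)))‖ ≤ 1 - A / 4 := by
  have hA1 : A ≤ 1 := HasLowerRieszPartition.le_one <|
    h 1 (ContinuousLinearMap.id ℂ _) (by simp) (ContinuousLinearMap.norm_id_le.trans one_le_two)
  intro δ _ hδ n P hP hPsa hdiag
  obtain ⟨K, _, rfl⟩ := isStarProjection_iff_eq_starProjection.mp ⟨hP, hPsa⟩
  have hcol : ∀ i, 1 / 2 ≤ ‖Kᗮ.starProjection (EuclideanSpace.single i (1 : ℂ))‖ := fun i =>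
    K.half_le_norm_starProjection_orthogonal (by simp) ((hdiag i).trans hδ)
  have hunit : ∀ i, ‖columnNormalized Kᗮ.starProjection (EuclideanSpace.single i 1)‖ = 1 :=
    fun i => norm_columnNormalized_apply_single <| norm_pos_iff.mp <|
      (one_half_pos (α := ℝ)).trans_le (hcol i)
  have hT : ‖columnNormalized Kᗮ.starProjection‖ ≤ 2 := by
    simpa using norm_columnNormalized_le one_half_pos Kᗮ.starProjection_norm_le hcol
  obtain ⟨part, hdisj, hcover, hriesz⟩ :
      HasLowerRieszPartition (columnNormalized Kᗮ.starProjection) r A := h n _ hunit hT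
  refine ⟨part, hdisj, hcover, fun j => ?_⟩
  have hblock := (hriesz j).of_columnNormalized hA.le one_half_pos hcol
  exact (norm_Qfin_comp_starProjection_comp_Qfin_le (by linarith) hblock).trans_eq (by ring)
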